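/- Every Penrose model set Λ_P ⊂ ℝ² is aperiodic: if t ∈ ℝ² satisfies t + Λ_P = Λ_P, then t = 0. -/

import Mathlib

open scoped Pointwise

noncomputable section

instance : TopologicalSpace (ZMod 5) := ⊥
instance : DiscreteTopology (ZMod 5) := ⟨rfl⟩

/-- The primitive 5th root of unity ζ₅ = exp(2πi/5). -/
def zeta5 : ℂ := Complex.exp (2 * Real.pi * Complex.I / 5)

/-- The ring of cyclotomic integers ℤ[ζ₅], as the set of ℤ-combinations of 1, ζ₅, ζ₅², ζ₅³. -/
def Zzeta5 : Set ℂ := {z | ∃ a : Fin 4 → ℤ, z = ∑ j : Fin 4, (a j : ℂ) * zeta5 ^ (j : ℕ)}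

/-- The (unique) integer coefficients of an element of ℤ[ζ₅] w.r.t. the basis 1, ζ₅, ζ₅², ζ₅³. -/
def coeffs (z : ℂ) : Fin 4 → ℤ :=
  open Classical in
  if h : z ∈ Zzeta5 then h.choose else 0

/-- The star map z ↦ (σ₂(z), Σ aⱼ(z) mod 5), with σ₂ the Galois automorphism ζ₅ ↦ ζ₅². -/
def starMap (z : ℂ) : ℂ × ZMod 5 :=
  (∑ j : Fin 4, (coeffs z j : ℂ) * zeta5 ^ (2 * (j : ℕ)),
   ∑ j : Fin 4, ((coeffs z j : ℤ) : ZMod 5))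

/-- The regular pentagon P: the convex hull of the 5th roots of unity. -/
def pent : Set ℂ := convexHull ℝ {z : ℂ | z ^ 5 = 1}

/-- The golden ratio τ = (1+√5)/2. -/
def tauR : ℝ := (1 + Real.sqrt 5) / 2

/-- The Penrose window W_P ⊂ ℝ² × ℤ/5ℤ. -/
def WP : Set (ℂ × ZMod 5) :=
  (pent ×ˢ ({1} : Set (ZMod 5))) ∪ ((-pent) ×ˢ ({2} : Set (ZMod 5))) ∪
    ((tauR • pent) ×ˢ ({3} : Set (ZMod 5))) ∪ ((-(tauR • pent)) ×ˢ ({4} : Set (ZMod 5)))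

/-- The shifted window W_P^u = (u, 0) + W_P. -/
def WPu (u : ℂ) : Set (ℂ × ZMod 5) := (fun p => ((u, (0 : ZMod 5)) + p)) '' WP

/-- The model set Λ_P^u = {z ∈ ℤ[ζ₅] : z⋆ ∈ W_P^u}. -/
def LambdaPu (u : ℂ) : Set ℂ := {z | z ∈ Zzeta5 ∧ starMap z ∈ WPu u}

/-- Λ_P^u is generic if the boundary of W_P^u contains no point of ℤ[ζ₅]⋆. -/
def IsGeneric (u : ℂ) : Prop := ∀ z ∈ Zzeta5, starMap z ∉ frontier (WPu u)

/-- A Penrose model set: a translate t + Λ_P^u of a generic Λ_P^u. -/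
def IsPMS (Λ : Set ℂ) : Prop := ∃ t u : ℂ, IsGeneric u ∧ Λ = (fun z => t + z) '' LambdaPu u

/-- v is parallel to u. -/
def Par (u v : ℂ) : Prop := ∃ r : ℝ, r ≠ 0 ∧ v = r • u

/-- A ℤ[ζ₅]-direction: a direction parallel to a nonzero element of ℤ[ζ₅]. -/
def IsZ5Direction (u : ℂ) : Prop := ∃ z ∈ Zzeta5, z ≠ 0 ∧ Par u z

/-- The line through p in direction u. -/
def line (u p : ℂ) : Set ℂ := {x | ∃ t : ℝ, x = p + t • u}

/-- The X-ray of F in direction u, as a function of the base point of the line. -/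
def Xray (u : ℂ) (F : Set ℂ) : ℂ → ℕ := fun p => (F ∩ line u p).ncard

/-- A convex subset C of Λ: a finite subset with C = conv(C) ∩ Λ. -/
def IsConvexSubset (Λ C : Set ℂ) : Prop :=
  C.Finite ∧ C ⊆ Λ ∧ C = convexHull ℝ C ∩ Λ

/-!
A period `t` of `s + Λ_P^u` is a difference of two points of `ℤ[ζ₅]`, so `t ∈ ℤ[ζ₅]` and
`z₀ + n t ∈ Λ_P^u` for all `n`. The star map is additive, so `σ₂(z₀) + n σ₂(t)` stays in the
bounded window, which forces `σ₂(t) = 0`, hence `t = 0` as `σ₂` is injective on `ℤ[ζ₅]`.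
The point `z₀` exists because `σ₂(ℤ[ζ₅]) = ℤ[ζ₅²] = ℤ[ζ₅]` is dense in `ℂ`: its real part contains
the powers of `2 cos (2π/5) ∈ (0, 1)`, and `ζ₅ ∉ ℝ`.
-/

lemma eq_zero_of_forall_add_nsmul_mem {E : Type*} [NormedAddCommGroup E] [NormedSpace ℝ E]
    {s : Set E} (hs : Bornology.IsBounded s) {a b : E} (h : ∀ n : ℕ, a + n • b ∈ s) : b = 0 := by
  obtain ⟨C, hC⟩ := hs.subset_closedBall 0
  by_contra hb
  obtain ⟨n, hn⟩ := exists_nat_gt ((C + ‖a‖) / ‖b‖)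
  rw [div_lt_iff₀ (norm_pos_iff.2 hb)] at hn
  have hmem : ‖a + n • b‖ ≤ C := by simpa using hC (h n)
  have : (n : ℝ) * ‖b‖ ≤ C + ‖a‖ :=
    calc (n : ℝ) * ‖b‖ = ‖a + n • b - a‖ := by
          rw [add_sub_cancel_left, RCLike.norm_nsmul ℝ, nsmul_eq_mul]
      _ ≤ ‖a + n • b‖ + ‖a‖ := norm_sub_le _ _
      _ ≤ C + ‖a‖ := by linarith
  linarith

lemma add_nsmul_mem_of_forall_add_mem {G : Type*} [AddCommMonoid G] {s : Set G} {t z : G}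
    (h : ∀ x ∈ s, t + x ∈ s) (hz : z ∈ s) : ∀ n : ℕ, z + n • t ∈ s
  | 0 => by simpa using hz
  | n + 1 => by
    rw [succ_nsmul, ← add_assoc, add_comm]
    exact h _ (add_nsmul_mem_of_forall_add_mem h hz n)

lemma surjective_ofReal_add_mul {ω : ℂ} (hω : ω.im ≠ 0) :
    Function.Surjective fun p : ℝ × ℝ => (p.1 : ℂ) + p.2 * ω := fun w =>
  ⟨(w.re - w.im / ω.im * ω.re, w.im / ω.im), Complex.ext (by simp) (by simp [hω])⟩

open Polynomial in
lemma natDegree_cyclotomic_five (R : Type*) [Ring R] [Nontrivial R] :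
    (cyclotomic 5 R).natDegree = 4 := by
  rw [natDegree_cyclotomic, Nat.totient_prime (by norm_num)]

def ofCoeffs (η : ℂ) : (Fin 4 → ℤ) →ₗ[ℤ] ℂ :=
  Fintype.linearCombination ℤ fun j : Fin 4 => η ^ (j : ℕ)

lemma ofCoeffs_apply (η : ℂ) (a : Fin 4 → ℤ) :
    ofCoeffs η a = ∑ j : Fin 4, (a j : ℂ) * η ^ (j : ℕ) := by
  simp [ofCoeffs, Fintype.linearCombination_apply, zsmul_eq_mul]

open Polynomial in
lemma ofCoeffs_injective {η : ℂ} (hη : IsPrimitiveRoot η 5) :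
    Function.Injective (ofCoeffs η) := by
  have hli := (linearIndependent_pow (K := ℚ) η).restrict_scalars' ℤ
  rw [← cyclotomic_eq_minpoly_rat hη (by norm_num), natDegree_cyclotomic_five] at hli
  exact hli.fintypeLinearCombination_injective

open Polynomial in
/-- Reducing modulo `Φ₅` writes every polynomial in `η` as one of degree `< 4`. -/
lemma adjoin_subset_range_ofCoeffs {η : ℂ} (hη : IsPrimitiveRoot η 5) :
    (Algebra.adjoin ℤ {η} : Set ℂ) ⊆ Set.range (ofCoeffs η) := by
  intro z hz
  rw [SetLike.mem_coe, Algebra.adjoin_singleton_eq_range_aeval] at hz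
  obtain ⟨p, rfl⟩ := hz
  have hroot : aeval η (cyclotomic 5 ℤ) = 0 := by
    rw [cyclotomic_eq_minpoly hη (by norm_num)]
    exact minpoly.aeval ℤ η
  have hne : cyclotomic 5 ℤ ≠ 1 := fun h => by simpa [h] using natDegree_cyclotomic_five ℤ
  have hdeg : (p %ₘ cyclotomic 5 ℤ).natDegree < 4 := by
    simpa [natDegree_cyclotomic_five] using natDegree_modByMonic_lt p (cyclotomic.monic 5 ℤ) hne
  refine ⟨fun j => (p %ₘ cyclotomic 5 ℤ).coeff j, ?_⟩
  rw [ofCoeffs_apply, AlgHom.toRingHom_eq_coe, RingHom.coe_coe,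
    ← aeval_modByMonic_eq_self_of_root hroot, aeval_eq_sum_range' hdeg, Finset.sum_range]
  simp [zsmul_eq_mul]

lemma isPrimitiveRoot_zeta5 : IsPrimitiveRoot zeta5 5 := by
  simpa [zeta5] using Complex.isPrimitiveRoot_exp 5 (by norm_num)

lemma isPrimitiveRoot_zeta5_sq : IsPrimitiveRoot (zeta5 ^ 2) 5 :=
  isPrimitiveRoot_zeta5.pow_of_coprime 2 (by norm_num)

lemma zeta5_eq_exp : zeta5 = Complex.exp ((2 * Real.pi / 5 : ℝ) * Complex.I) := by
  rw [zeta5]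
  push_cast
  ring_nf

lemma zeta5_re : zeta5.re = Real.cos (2 * Real.pi / 5) := by
  rw [zeta5_eq_exp, Complex.exp_ofReal_mul_I_re]

lemma zeta5_im : zeta5.im = Real.sin (2 * Real.pi / 5) := by
  rw [zeta5_eq_exp, Complex.exp_ofReal_mul_I_im]

lemma cos_two_pi_div_five_pos : 0 < Real.cos (2 * Real.pi / 5) :=
  Real.cos_pos_of_mem_Ioo ⟨by linarith [Real.pi_pos], by linarith [Real.pi_pos]⟩

lemma cos_two_pi_div_five_lt : Real.cos (2 * Real.pi / 5) < 1 / 2 := by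
  rw [← Real.cos_pi_div_three]
  apply Real.cos_lt_cos_of_nonneg_of_le_pi <;> linarith [Real.pi_pos]

lemma zeta5_im_pos : 0 < zeta5.im := by
  rw [zeta5_im]
  apply Real.sin_pos_of_pos_of_lt_pi <;> linarith [Real.pi_pos]

lemma zeta5_pow_four : zeta5 ^ 4 = (starRingEnd ℂ) zeta5 := by
  rw [← Complex.inv_eq_conj (Complex.norm_eq_one_of_pow_eq_one isPrimitiveRoot_zeta5.pow_eq_one
    (by norm_num))]
  refine (inv_eq_of_mul_eq_one_right ?_).symm
  rw [← pow_succ', isPrimitiveRoot_zeta5.pow_eq_one]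

lemma Zzeta5_eq_range : Zzeta5 = Set.range (ofCoeffs zeta5) := by
  ext z
  simp [Zzeta5, ofCoeffs_apply, eq_comm]

lemma coeffs_ofCoeffs (a : Fin 4 → ℤ) : coeffs (ofCoeffs zeta5 a) = a := by
  have h : ofCoeffs zeta5 a ∈ Zzeta5 := Zzeta5_eq_range ▸ ⟨a, rfl⟩
  rw [coeffs, dif_pos h]
  apply ofCoeffs_injective isPrimitiveRoot_zeta5
  rw [ofCoeffs_apply, ← h.choose_spec]

lemma starMap_ofCoeffs (a : Fin 4 → ℤ) :
    starMap (ofCoeffs zeta5 a) = (ofCoeffs (zeta5 ^ 2) a, ∑ j : Fin 4, (a j : ZMod 5)) := by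
  simp only [starMap, coeffs_ofCoeffs]
  simp only [ofCoeffs_apply, pow_mul]

lemma dense_adjoin_zeta5 : Dense (Algebra.adjoin ℤ {zeta5} : Set ℂ) := by
  set A := Algebra.adjoin ℤ {zeta5}
  have hζ : zeta5 ∈ A := Algebra.self_mem_adjoin_singleton ℤ zeta5
  let D : Subring ℝ := A.toSubring.comap Complex.ofRealHom
  set β := 2 * Real.cos (2 * Real.pi / 5)
  have hβ : β ∈ D := by
    change ((β : ℝ) : ℂ) ∈ A
    rw [show ((β : ℝ) : ℂ) = zeta5 + zeta5 ^ 4 by rw [zeta5_pow_four, Complex.add_conj, zeta5_re]]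
    exact add_mem hζ (pow_mem hζ 4)
  have hD : Dense (D : Set ℝ) := by
    refine AddSubgroup.dense_of_not_isolated_zero D.toAddSubgroup fun ε hε => ?_
    obtain ⟨k, hk⟩ := exists_pow_lt_of_lt_one hε (show β < 1 by linarith [cos_two_pi_div_five_lt])
    exact ⟨β ^ k, pow_mem hβ k, pow_pos (by linarith [cos_two_pi_div_five_pos]) k, hk⟩
  refine Dense.mono ?_ <| (surjective_ofReal_add_mul zeta5_im_pos.ne').denseRange.dense_image
    (by fun_prop) (hD.prod hD)
  rintro _ ⟨⟨x, y⟩, ⟨hx, hy⟩, rfl⟩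
  exact add_mem hx (mul_mem hy hζ)

lemma dense_range_ofCoeffs_zeta5_sq : Dense (Set.range (ofCoeffs (zeta5 ^ 2))) := by
  refine dense_adjoin_zeta5.mono
    (subset_trans ?_ (adjoin_subset_range_ofCoeffs isPrimitiveRoot_zeta5_sq))
  refine SetLike.coe_subset_coe.2 (Algebra.adjoin_le (Set.singleton_subset_iff.2 ?_))
  have hcube : (zeta5 ^ 2) ^ 3 = zeta5 := by
    rw [← pow_mul, show 2 * 3 = 5 + 1 by rfl, pow_succ, isPrimitiveRoot_zeta5.pow_eq_one, one_mul]
  have h := pow_mem (Algebra.self_mem_adjoin_singleton ℤ (zeta5 ^ 2)) 3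
  rwa [hcube] at h

/-- `ζ₅ - 1` and `ζ̄₅ - 1` have sum `2 (Re ζ₅ - 1) ≠ 0` and difference `2 i Im ζ₅ ≠ 0`. -/
lemma vectorSpan_rootsOfUnity_five : vectorSpan ℝ {z : ℂ | z ^ 5 = 1} = ⊤ := by
  set V := vectorSpan ℝ {z : ℂ | z ^ 5 = 1}
  have hone : (1 : ℂ) ^ 5 = 1 := one_pow 5
  have hζ : zeta5 - 1 ∈ V := vsub_mem_vectorSpan ℝ isPrimitiveRoot_zeta5.pow_eq_one hone
  have hζ' : (starRingEnd ℂ) zeta5 - 1 ∈ V := by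
    refine vsub_mem_vectorSpan ℝ ?_ hone
    rw [Set.mem_ofPred_eq, ← zeta5_pow_four, ← pow_mul, mul_comm, pow_mul,
      isPrimitiveRoot_zeta5.pow_eq_one, one_pow]
  have hre : zeta5.re - 1 ≠ 0 := by linarith [zeta5_re, cos_two_pi_div_five_lt]
  have h1 : (1 : ℂ) ∈ V := by
    have hsum : zeta5 - 1 + ((starRingEnd ℂ) zeta5 - 1) = ((2 * (zeta5.re - 1) : ℝ) : ℂ) := by
      have h := Complex.add_conj zeta5
      push_cast at h ⊢
      linear_combination h
    convert V.smul_mem (2 * (zeta5.re - 1))⁻¹ (V.add_mem hζ hζ') using 1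
    rw [hsum, Complex.real_smul, ← Complex.ofReal_mul, inv_mul_cancel₀ (by simpa using hre),
      Complex.ofReal_one]
  have hI : Complex.I ∈ V := by
    convert V.smul_mem (2 * zeta5.im)⁻¹ (V.sub_mem hζ hζ') using 1
    rw [sub_sub_sub_cancel_right, Complex.sub_conj, Complex.real_smul, ← mul_assoc,
      ← Complex.ofReal_mul, inv_mul_cancel₀ (by linarith [zeta5_im_pos]), Complex.ofReal_one,
      one_mul]
  refine eq_top_iff.2 fun w _ => ?_
  rw [← Complex.re_add_im w]
  exact V.add_mem (by simpa using V.smul_mem w.re h1) (by simpa using V.smul_mem w.im hI)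

lemma interior_pent_nonempty : (interior pent).Nonempty := by
  have hne : Set.Nonempty {z : ℂ | z ^ 5 = 1} := ⟨1, one_pow 5⟩
  rw [pent, (convex_convexHull ℝ _).interior_nonempty_iff_affineSpan_eq_top, affineSpan_convexHull,
    AffineSubspace.affineSpan_eq_top_iff_vectorSpan_eq_top_of_nonempty ℝ ℂ ℂ hne]
  exact vectorSpan_rootsOfUnity_five

lemma pent_subset_closedBall : pent ⊆ Metric.closedBall 0 1 :=
  convexHull_min
    (fun z hz => by simpa using (Complex.norm_eq_one_of_pow_eq_one hz (by norm_num)).le)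
    (convex_closedBall 0 1)

lemma isBounded_fst_WPu (u : ℂ) : Bornology.IsBounded (Prod.fst '' WPu u) := by
  have hP : Bornology.IsBounded pent := Metric.isBounded_closedBall.subset pent_subset_closedBall
  have hWP : Prod.fst '' WP ⊆ pent ∪ -pent ∪ tauR • pent ∪ -(tauR • pent) := by
    rintro _ ⟨p, ((hp | hp) | hp) | hp, rfl⟩
    exacts [Or.inl (Or.inl (Or.inl hp.1)), Or.inl (Or.inl (Or.inr hp.1)), Or.inl (Or.inr hp.1),
      Or.inr hp.1]
  have hWPu : Prod.fst '' WPu u = u +ᵥ Prod.fst '' WP := by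
    rw [WPu, Set.image_image, ← Set.image_vadd, Set.image_image]
    rfl
  rw [hWPu]
  exact (((hP.union hP.neg).union (hP.smul₀ _)).union (hP.smul₀ _).neg |>.subset hWP).vadd u

lemma LambdaPu_nonempty (u : ℂ) : (LambdaPu u).Nonempty := by
  have hopen : IsOpen ((fun w => 1 + 5 * w - u) ⁻¹' interior pent) :=
    isOpen_interior.preimage (by fun_prop)
  obtain ⟨p, hp⟩ := interior_pent_nonempty
  obtain ⟨_, ⟨a, rfl⟩, ha⟩ := dense_range_ofCoeffs_zeta5_sq.exists_mem_open hopen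
    ⟨(p + u - 1) / 5, by simpa [mul_div_cancel₀] using hp⟩
  -- coefficient sum `≡ 1 (mod 5)`, so the star lands on the sheet `P × {1}` of the window
  set b : Fin 4 → ℤ := Pi.single 0 1 + 5 • a
  refine ⟨ofCoeffs zeta5 b, Zzeta5_eq_range ▸ ⟨b, rfl⟩, (1 + 5 * ofCoeffs (zeta5 ^ 2) a - u, 1),
    Or.inl (Or.inl (Or.inl ⟨interior_subset ha, rfl⟩)), ?_⟩
  have hb₁ : ofCoeffs (zeta5 ^ 2) b = 1 + 5 * ofCoeffs (zeta5 ^ 2) a := by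
    rw [map_add, map_nsmul, nsmul_eq_mul]
    simp [ofCoeffs]
  have hb₂ : ∑ j : Fin 4, (b j : ZMod 5) = 1 := by
    simp [b, Fin.sum_univ_four, show (5 : ZMod 5) = 0 from rfl]
  rw [starMap_ofCoeffs, hb₁, hb₂]
  simp

theorem pms_aperiodic (Λ : Set ℂ) (hΛ : IsPMS Λ) (t : ℂ)
    (h : (fun z => t + z) '' Λ = Λ) : t = 0 := by
  obtain ⟨s, u, -, rfl⟩ := hΛ
  have hinv : (fun z => t + z) '' LambdaPu u = LambdaPu u := by
    refine Set.image_injective.2 (add_right_injective s) ?_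
    simpa only [Set.image_image, add_left_comm t s] using h
  have hstep : ∀ z ∈ LambdaPu u, t + z ∈ LambdaPu u := fun z hz => hinv.subset ⟨z, hz, rfl⟩
  obtain ⟨z₀, hz₀⟩ := LambdaPu_nonempty u
  obtain ⟨a, rfl⟩ : z₀ ∈ Set.range (ofCoeffs zeta5) := Zzeta5_eq_range ▸ hz₀.1
  obtain ⟨b, rfl⟩ : t ∈ Set.range (ofCoeffs zeta5) := by
    obtain ⟨c, hc⟩ : t + ofCoeffs zeta5 a ∈ Set.range (ofCoeffs zeta5) :=
      Zzeta5_eq_range ▸ (hstep _ hz₀).1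
    exact ⟨c - a, by rw [map_sub, hc, add_sub_cancel_right]⟩
  suffices ofCoeffs (zeta5 ^ 2) b = 0 by
    rw [(injective_iff_map_eq_zero _).1 (ofCoeffs_injective isPrimitiveRoot_zeta5_sq) b this,
      map_zero]
  refine eq_zero_of_forall_add_nsmul_mem (isBounded_fst_WPu u) (a := ofCoeffs (zeta5 ^ 2) a)
    fun n => ?_
  have hn := (add_nsmul_mem_of_forall_add_mem hstep hz₀ n).2
  rw [← map_nsmul, ← map_add, starMap_ofCoeffs] at hn
  simpa only [map_add, map_nsmul] using Set.mem_image_of_mem Prod.fst hn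

end
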